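/- Let N ≥ 1, let f_i : ℝ → ℝ for i = 1,…,N be differentiable and strictly convex on ℝ, let d_i > 0, and define g_i(s) = f_i(d_i/s) for s > 0. Then a point s⋆ > 0 is the unique global minimiser of s ↦ Σ_{i=1}^N g_i(s) over (0,∞) — i.e., Σ_i g_i(s) > Σ_i g_i(s⋆) for all s > 0 with s ≠ s⋆ — if and only if Σ_{i=1}^N g_i'(s⋆) = 0. -/

import Mathlib

/-!
Substituting `t = 1 / s`, the objective becomes `∑ i, g i s = H (1 / s)` with
`H t = ∑ i, f i (d i * t)`, which is strictly convex on `ℝ` as a nonempty sum of strictly convex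
functions precomposed with injective linear maps. Since `s ↦ 1 / s` is a bijection of `(0, ∞)`
with nonvanishing derivative, `s⋆` is the strict global minimiser of the objective iff `1 / s⋆` is
that of `H` on the open set `(0, ∞)`, iff `H' (1 / s⋆) = 0`, iff `∑ i, (g i)' s⋆ = 0`.
-/

open Finset Set Filter Topology

theorem StrictConvexOn.comp_linearMap_of_injective {𝕜 E F β : Type*} [Semiring 𝕜] [PartialOrder 𝕜]
    [AddCommMonoid E] [AddCommMonoid F] [AddCommMonoid β] [PartialOrder β]
    [Module 𝕜 E] [Module 𝕜 F] [SMul 𝕜 β] {f : F → β} {s : Set F}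
    (hf : StrictConvexOn 𝕜 s f) {g : E →ₗ[𝕜] F} (hg : Function.Injective g) :
    StrictConvexOn 𝕜 (g ⁻¹' s) (f ∘ g) :=
  ⟨hf.1.linear_preimage _, fun x hx y hy hxy a b ha hb hab =>
    calc
      f (g (a • x + b • y)) = f (a • g x + b • g y) := by rw [g.map_add, g.map_smul, g.map_smul]
      _ < a • f (g x) + b • f (g y) := hf.2 hx hy (hg.ne hxy) ha hb hab⟩

theorem Finset.strictConvexOn_sum {𝕜 E β ι : Type*} [Semiring 𝕜] [PartialOrder 𝕜]
    [AddCommMonoid E] [AddCommMonoid β] [PartialOrder β] [IsOrderedCancelAddMonoid β]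
    [SMul 𝕜 E] [DistribMulAction 𝕜 β] {s : Set E} {t : Finset ι} {f : ι → E → β}
    (ht : t.Nonempty) (hf : ∀ i ∈ t, StrictConvexOn 𝕜 s (f i)) :
    StrictConvexOn 𝕜 s (fun x => ∑ i ∈ t, f i x) := by
  induction ht using Finset.Nonempty.cons_induction with
  | singleton i => simpa using hf i (mem_singleton_self i)
  | cons i t hi ht ih =>
    simp only [sum_cons]
    exact (hf i (mem_cons_self i t)).add (ih fun j hj => hf j (mem_cons_of_mem hj))

theorem StrictConvexOn.lt_of_hasDerivAt_eq_zero {S : Set ℝ} {f : ℝ → ℝ} {x y : ℝ}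
    (hf : StrictConvexOn ℝ S f) (hx : x ∈ S) (hy : y ∈ S) (hyx : y ≠ x) (hf' : HasDerivAt f 0 x) :
    f x < f y := by
  rcases hyx.lt_or_gt with h | h
  · have hslope : slope f y x < 0 := hf.slope_lt_of_hasDerivAt hy hx h hf'
    rwa [slope_def_field, div_lt_iff₀ (sub_pos.2 h), zero_mul, sub_neg] at hslope
  · have hslope : 0 < slope f x y := hf.lt_slope_of_hasDerivAt hx hy h hf'
    rwa [slope_def_field, lt_div_iff₀ (sub_pos.2 h), zero_mul, sub_pos] at hslope

theorem StrictConvexOn.forall_lt_iff_deriv_eq_zero {S : Set ℝ} {f : ℝ → ℝ} {x : ℝ}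
    (hf : StrictConvexOn ℝ S f) (hS : S ∈ 𝓝 x) (hfx : DifferentiableAt ℝ f x) :
    (∀ y ∈ S, y ≠ x → f x < f y) ↔ deriv f x = 0 := by
  refine ⟨fun hmin => IsLocalMin.deriv_eq_zero ?_, fun h0 y hy hyx => ?_⟩
  · filter_upwards [hS] with y hy
    rcases eq_or_ne y x with rfl | hyx
    exacts [le_rfl, (hmin y hy hyx).le]
  · exact hf.lt_of_hasDerivAt_eq_zero (mem_of_mem_nhds hS) hy hyx (h0 ▸ hfx.hasDerivAt)

theorem forall_pos_ne_inv_iff {p : ℝ → Prop} {a : ℝ} :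
    (∀ s, 0 < s → s ≠ a → p s⁻¹) ↔ ∀ t ∈ Ioi (0 : ℝ), t ≠ a⁻¹ → p t := by
  refine ⟨fun h t ht hta => ?_, fun h s hs hsa => h s⁻¹ (inv_pos.2 hs) (inv_injective.ne hsa)⟩
  simpa using h t⁻¹ (inv_pos.2 ht) (fun hinv => hta (by rw [← hinv, inv_inv]))

/-- Proposition 2: `s⋆ > 0` is the unique global minimiser of
`s ↦ ∑ i, g i s` on `(0, ∞)`, where `g i s = f i (d i / s)` with each `f i`
differentiable and strictly convex and `d i > 0`, if and only if
`∑ i, (g i)' s⋆ = 0`. -/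
theorem sum_speed_risk_unique_min_iff_deriv_sum_zero
    (N : ℕ) (hN : 1 ≤ N)
    (f : Fin N → ℝ → ℝ)
    (hfd : ∀ i, Differentiable ℝ (f i))
    (hfc : ∀ i, StrictConvexOn ℝ (Set.univ : Set ℝ) (f i))
    (d : Fin N → ℝ) (hd : ∀ i, 0 < d i)
    (g : Fin N → ℝ → ℝ) (hg : ∀ i s, g i s = f i (d i / s))
    (sstar : ℝ) (hs : 0 < sstar) :
    (∀ s : ℝ, 0 < s → s ≠ sstar → ∑ i, g i s > ∑ i, g i sstar) ↔
      ∑ i, deriv (g i) sstar = 0 := by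
  set H : ℝ → ℝ := fun t => ∑ i, f i (d i * t) with hH
  have hGH : ∀ s, ∑ i, g i s = H s⁻¹ := fun s => by simp only [hH, hg, div_eq_mul_inv]
  have hHconv : StrictConvexOn ℝ (Ioi 0) H :=
    (strictConvexOn_sum ⟨⟨0, hN⟩, mem_univ _⟩ fun i _ =>
      (hfc i).comp_linearMap_of_injective (g := LinearMap.mulLeft ℝ (d i))
        (mul_right_injective₀ (hd i).ne')).subset (subset_univ _) (convex_Ioi 0)
  have hHdiff : Differentiable ℝ H := by fun_prop
  have hderiv : ∑ i, deriv (g i) sstar = deriv H sstar⁻¹ * -(sstar ^ 2)⁻¹ := by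
    rw [← deriv_fun_sum fun i _ => ?_, funext hGH]
    · exact ((hHdiff _).hasDerivAt.comp sstar (hasDerivAt_inv hs.ne')).deriv
    · rw [funext (hg i)]
      fun_prop (disch := exact hs.ne')
  simp_rw [hGH, gt_iff_lt]
  rw [forall_pos_ne_inv_iff (p := fun t => H sstar⁻¹ < H t),
    hHconv.forall_lt_iff_deriv_eq_zero (Ioi_mem_nhds (inv_pos.2 hs)) (hHdiff _), hderiv]
  simp [hs.ne']
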